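/- Let p ≥ 1 and n ≥ 1 be integers, let a, b be reals with p/2 + a + 1 > 0 and b > -1, let γ be a real with 0 ≤ γ < p/2 + a + 1, and let π(g) = (g+1)^{-(a+2)}(g/(g+1))^b. Then for every integer i ≥ 1, every w > 0 and every s > 0, setting z = w/(1+w): ∫_0^∞∫_0^∞ F(g,η;w,s) h_i(η)² (g+1)^γ π(g) dg dη = [(1-z)^{p/2-γ+a+1} / s^{p/2+n/2+1}] · ∫_0^1∫_0^∞ [t^{p/2-γ+a} (1-t)^b / (1-zt)^{p/2-γ+a+b+2}] · v^{p/2+n/2} exp(-v/(2(1-zt))) · h_i(v/s)² dv dt. -/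

import Mathlib

open MeasureTheory Real Set

/-- The kernel `F(g,η;w,s)`. -/
noncomputable def Fker (p n : ℕ) (g η w s : ℝ) : ℝ :=
  η ^ ((p : ℝ) / 2 + (n : ℝ) / 2) * (g + 1) ^ (-(p : ℝ) / 2) *
    Real.exp (-(η * s / 2) * (w / (g + 1) + 1))

/-- The sequence `h_i(η) = i/(i + |log η|)`. -/
noncomputable def hfun (i : ℕ) (η : ℝ) : ℝ :=
  (i : ℝ) / ((i : ℝ) + |Real.log η|)

/-- The prior `π(g) = (g+1)^{-(a+2)} (g/(g+1))^b`. -/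
noncomputable def priorPi (a b g : ℝ) : ℝ :=
  (g + 1) ^ (-(a + 2)) * (g / (g + 1)) ^ b

/-!
Substituting `v = s η` in the inner integral and `t = (1 + w) / (g + 1 + w)` in the outer one
turns both sides into the same integral over `g > 0`: the exponent `w / (g + 1) + 1` becomes
`1 / (1 - z t)`, and the Jacobian `(1 + w) / (g + 1 + w)²` times the beta weight in `t` collapses
to the prior factor `g ^ b (g + 1) ^ (-(p/2 - γ + a + b + 2))`. Both substitutions are
diffeomorphisms, so the change of variables formulas need no integrability assumption.
-/

theorem integral_Ioi_rpow_mul_comp_mul_left (c : ℝ) (f : ℝ → ℝ) {s : ℝ} (hs : 0 < s) :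
    ∫ x in Ioi (0 : ℝ), x ^ c * f (s * x) = s ^ (-(c + 1)) * ∫ x in Ioi (0 : ℝ), x ^ c * f x := by
  have hsc : s ^ (-(c + 1)) = s ^ (-c) * s⁻¹ := by
    rw [neg_add, rpow_add hs, rpow_neg_one]
  calc ∫ x in Ioi (0 : ℝ), x ^ c * f (s * x)
      = ∫ x in Ioi (0 : ℝ), s ^ (-c) * ((s * x) ^ c * f (s * x)) := by
        refine setIntegral_congr_fun measurableSet_Ioi fun x (hx : 0 < x) => ?_
        rw [mul_rpow hs.le hx.le, rpow_neg hs.le, ← mul_assoc, ← mul_assoc,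
          inv_mul_cancel₀ (rpow_pos_of_pos hs c).ne', one_mul]
    _ = s ^ (-(c + 1)) * ∫ x in Ioi (0 : ℝ), x ^ c * f x := by
        rw [integral_const_mul, integral_comp_mul_left_Ioi (fun x => x ^ c * f x) 0 hs,
          mul_zero, smul_eq_mul, hsc, mul_assoc]

theorem integral_Ioo_zero_one_eq_integral_Ioi_div_add (f : ℝ → ℝ) {c : ℝ} (hc : 0 < c) :
    ∫ t in Ioo (0 : ℝ) 1, f t = ∫ x in Ioi (0 : ℝ), c / (x + c) ^ 2 * f (c / (x + c)) := by
  have hpos : ∀ x ∈ Ioi (0 : ℝ), 0 < x + c := fun x (hx : 0 < x) => by linarith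
  have himage : (fun x => c / (x + c)) '' Ioi 0 = Ioo (0 : ℝ) 1 := by
    ext t
    constructor
    · rintro ⟨x, hx, rfl⟩
      have hxc := hpos x hx
      exact ⟨by positivity, (div_lt_one hxc).2 (by linarith [mem_Ioi.1 hx])⟩
    · rintro ⟨ht0, ht1⟩
      refine ⟨c * (1 - t) / t, div_pos (mul_pos hc (by linarith)) ht0, ?_⟩
      field_simp
      ring
  have hderiv : ∀ x ∈ Ioi (0 : ℝ),
      HasDerivWithinAt (fun x => c / (x + c)) (-(c / (x + c) ^ 2)) (Ioi 0) x := by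
    intro x hx
    have h : HasDerivAt (fun x => c / (x + c)) ((0 * (x + c) - c * 1) / (x + c) ^ 2) x :=
      (hasDerivAt_const x c).div ((hasDerivAt_id' x).add_const c) (hpos x hx).ne'
    exact h.hasDerivWithinAt.congr_deriv (by ring)
  have hinj : InjOn (fun x => c / (x + c)) (Ioi 0) := by
    intro x hx y hy hxy
    have hxy' := congrArg (c / ·) hxy
    simp only [div_div_cancel₀ hc.ne'] at hxy'
    linarith
  rw [← himage, integral_image_eq_integral_abs_deriv_smul measurableSet_Ioi hderiv hinj]
  refine setIntegral_congr_fun measurableSet_Ioi fun x hx => ?_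
  rw [abs_neg, abs_of_pos (div_pos hc (pow_pos (hpos x hx) 2)), smul_eq_mul]

theorem integral_Ioi_mul_rpow_mul_exp_div (A D c : ℝ) (f : ℝ → ℝ) :
    ∫ v in Ioi (0 : ℝ), A * v ^ c * exp (-v / (2 * D)) * f v
      = A * ∫ v in Ioi (0 : ℝ), v ^ c * (exp (-(v / 2) * D⁻¹) * f v) := by
  rw [← integral_const_mul]
  congr with v
  ring_nf

theorem rpow_neg_mul_rpow_mul_priorPi (q γ a b : ℝ) {g : ℝ} (hg : 0 < g) :
    (g + 1) ^ (-q) * (g + 1) ^ γ * priorPi a b g = g ^ b * (g + 1) ^ (-(q - γ + a + b + 2)) := by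
  have hg1 : 0 < g + 1 := by linarith
  rw [priorPi, div_rpow hg.le hg1.le, div_eq_mul_inv, ← rpow_neg hg1.le,
    show -(q - γ + a + b + 2) = -q + γ + -(a + 2) + -b by ring,
    rpow_add hg1, rpow_add hg1, rpow_add hg1]
  ring

theorem one_sub_div_mul_div_add (w : ℝ) {g : ℝ} (hg : 0 < g) (hw : 0 < w) :
    1 - w / (1 + w) * ((1 + w) / (g + (1 + w))) = (g + 1) / (g + (1 + w)) := by
  field_simp
  ring

theorem one_sub_rpow_mul_jacobian_mul_weight (β b : ℝ) {g w : ℝ} (hg : 0 < g) (hw : 0 < w) :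
    (1 - w / (1 + w)) ^ (β + 1) * ((1 + w) / (g + (1 + w)) ^ 2 *
      (((1 + w) / (g + (1 + w))) ^ β * (1 - (1 + w) / (g + (1 + w))) ^ b /
        (1 - w / (1 + w) * ((1 + w) / (g + (1 + w)))) ^ (β + b + 2)))
      = g ^ b * (g + 1) ^ (-(β + b + 2)) := by
  have hw1 : 0 < 1 + w := by linarith
  have hg1 : 0 < g + 1 := by linarith
  have hgw : 0 < g + (1 + w) := by linarith
  have hz : 1 - w / (1 + w) = (1 + w)⁻¹ := by field_simp; ring
  have ht : 1 - (1 + w) / (g + (1 + w)) = g / (g + (1 + w)) := by field_simp; ring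
  rw [hz, ht, one_sub_div_mul_div_add w hg hw, inv_rpow hw1.le, div_rpow hw1.le hgw.le, div_rpow hg.le hgw.le,
    div_rpow hg1.le hgw.le, rpow_neg hg1.le]
  simp only [rpow_add hw1, rpow_add hgw, rpow_one, rpow_two]
  field_simp

theorem integral_Ioi_Fker_mul (p n : ℕ) (a b γ : ℝ) (i : ℕ) {g w s : ℝ} (hg : 0 < g)
    (hs : 0 < s) :
    ∫ η in Ioi (0 : ℝ), Fker p n g η w s * hfun i η ^ 2 * (g + 1) ^ γ * priorPi a b g
      = g ^ b * (g + 1) ^ (-((p : ℝ) / 2 - γ + a + b + 2)) *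
        (s ^ (-((p : ℝ) / 2 + n / 2 + 1)) * ∫ v in Ioi (0 : ℝ),
          v ^ ((p : ℝ) / 2 + n / 2) * (exp (-(v / 2) * (w / (g + 1) + 1)) * hfun i (v / s) ^ 2)) := by
  rw [← rpow_neg_mul_rpow_mul_priorPi _ _ _ _ hg,
    ← integral_Ioi_rpow_mul_comp_mul_left _
      (fun v => exp (-(v / 2) * (w / (g + 1) + 1)) * hfun i (v / s) ^ 2) hs,
    ← integral_const_mul]
  refine setIntegral_congr_fun measurableSet_Ioi fun η _ => ?_
  simp only [Fker, neg_div, mul_div_cancel_left₀ _ hs.ne']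
  ring_nf

theorem change_of_variables_identity_general (p n : ℕ) (a b : ℝ) (γ : ℝ) (i : ℕ) (w s : ℝ)
    (hw : 0 < w) (hs : 0 < s) :
    (∫ g in Ioi (0 : ℝ), ∫ η in Ioi (0 : ℝ),
        Fker p n g η w s * (hfun i η) ^ 2 * (g + 1) ^ γ * priorPi a b g)
      = (1 - w / (1 + w)) ^ ((p : ℝ) / 2 - γ + a + 1) / s ^ ((p : ℝ) / 2 + (n : ℝ) / 2 + 1) *
        ∫ t in Ioo (0 : ℝ) 1, ∫ v in Ioi (0 : ℝ),
          (t ^ ((p : ℝ) / 2 - γ + a) * (1 - t) ^ b /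
              (1 - (w / (1 + w)) * t) ^ ((p : ℝ) / 2 - γ + a + b + 2)) *
            v ^ ((p : ℝ) / 2 + (n : ℝ) / 2) *
            Real.exp (-v / (2 * (1 - (w / (1 + w)) * t))) * (hfun i (v / s)) ^ 2 := by
  rw [integral_Ioo_zero_one_eq_integral_Ioi_div_add _ (by linarith : (0 : ℝ) < 1 + w),
    ← integral_const_mul]
  refine setIntegral_congr_fun measurableSet_Ioi fun g (hg : 0 < g) => ?_
  have hK : (1 - w / (1 + w) * ((1 + w) / (g + (1 + w))))⁻¹ = w / (g + 1) + 1 := by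
    rw [one_sub_div_mul_div_add w hg hw]
    field_simp
    ring
  rw [integral_Ioi_Fker_mul _ _ _ _ _ _ hg hs, integral_Ioi_mul_rpow_mul_exp_div, hK,
    ← one_sub_rpow_mul_jacobian_mul_weight _ _ hg hw, rpow_neg hs.le]
  ring

/-- Change-of-variables identity (Part 1 of Lemma B.5 of the paper). -/
theorem change_of_variables_identity (p n : ℕ) (hp : 1 ≤ p) (hn : 1 ≤ n)
    (a b : ℝ) (hpa : (p : ℝ) / 2 + a + 1 > 0) (hb : -1 < b)
    (γ : ℝ) (hγ0 : 0 ≤ γ) (hγ1 : γ < (p : ℝ) / 2 + a + 1)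
    (i : ℕ) (hi : 1 ≤ i) (w s : ℝ) (hw : 0 < w) (hs : 0 < s) :
    (∫ g in Ioi (0 : ℝ), ∫ η in Ioi (0 : ℝ),
        Fker p n g η w s * (hfun i η) ^ 2 * (g + 1) ^ γ * priorPi a b g)
      = (1 - w / (1 + w)) ^ ((p : ℝ) / 2 - γ + a + 1) / s ^ ((p : ℝ) / 2 + (n : ℝ) / 2 + 1) *
        ∫ t in Ioo (0 : ℝ) 1, ∫ v in Ioi (0 : ℝ),
          (t ^ ((p : ℝ) / 2 - γ + a) * (1 - t) ^ b /
              (1 - (w / (1 + w)) * t) ^ ((p : ℝ) / 2 - γ + a + b + 2)) *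
            v ^ ((p : ℝ) / 2 + (n : ℝ) / 2) *
            Real.exp (-v / (2 * (1 - (w / (1 + w)) * t))) * (hfun i (v / s)) ^ 2 :=
  change_of_variables_identity_general p n a b γ i w s hw hs
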